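/- Let n ≥ 2 and let A be a symmetric n×n complex matrix (Aᵀ = A) with rank A = 2. Consider the ℂ-subspace T of n×n complex matrices defined by T = {B : Bᵀ = B and for every v ∈ ℂⁿ with A·v = 0 one has B·v ∈ range(A·−)}, where A·v = Matrix.mulVec A v and range(A·−) is the column space of A. Then finrank_ℂ T = 2n − 1. -/

import Mathlib

/-!
Because `A` is symmetric, `range A` is the orthogonal complement of `K = ker A` for the dot
product, so `T` is the space of symmetric matrices whose bilinear form vanishes on `K × K`.
In a basis adapted to a splitting `ℂⁿ = W ⊕ K`, where `dim W = rank A = 2`, the Gram matrix of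
such a form is a symmetric block matrix with zero `K × K` block; it is determined by its
symmetric `W × W` block and its arbitrary `W × K` block, giving `3 + 2 (n - 2) = 2n - 1`.
-/

open Matrix Module

namespace Matrix

variable {F : Type*} [Field F]

section Range

variable {m n : Type*} [Fintype m] [Fintype n] [DecidableEq m]

theorem mem_range_mulVecLin_iff (A : Matrix m n F) (x : m → F) :
    x ∈ LinearMap.range A.mulVecLin ↔ ∀ v, Aᵀ *ᵥ v = 0 → v ⬝ᵥ x = 0 := by
  set D : LinearMap.BilinForm F (m → F) := toLinearMap₂' F (1 : Matrix m m F)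
  have hD : ∀ u v, D u v = u ⬝ᵥ v := fun u v => by simp [D, toLinearMap₂'_apply']
  have hDnd : D.Nondegenerate :=
    LinearMap.nondegenerate_toLinearMap₂'_iff_det_ne_zero.mpr (by simp)
  have hDrefl : D.IsRefl := fun u v h => by rwa [hD, dotProduct_comm, ← hD]
  have horth : D.orthogonal (LinearMap.range A.mulVecLin) = LinearMap.ker Aᵀ.mulVecLin := by
    ext v
    simp only [LinearMap.BilinForm.mem_orthogonal_iff, LinearMap.mem_range, LinearMap.mem_ker,
      forall_exists_index, forall_apply_eq_imp_iff, mulVecLin_apply, hD]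
    rw [← dotProduct_eq_zero_iff]
    simp only [dotProduct_comm _ v, dotProduct_mulVec, mulVec_transpose]
  rw [← LinearMap.BilinForm.orthogonal_orthogonal hDnd hDrefl (LinearMap.range _), horth]
  simp [hD, mulVec_transpose]

theorem IsSymm.forall_mulVec_mem_range_iff {A : Matrix m m F} (hA : A.IsSymm)
    (B : Matrix m m F) :
    (∀ v, A *ᵥ v = 0 → ∃ w, B *ᵥ v = A *ᵥ w) ↔
      ∀ u ∈ LinearMap.ker A.mulVecLin, ∀ v ∈ LinearMap.ker A.mulVecLin, u ⬝ᵥ B *ᵥ v = 0 := by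
  have hrange : ∀ x, (∃ w, x = A *ᵥ w) ↔ ∀ u, A *ᵥ u = 0 → u ⬝ᵥ x = 0 := fun x => by
    simpa only [hA.eq, LinearMap.mem_range, mulVecLin_apply, eq_comm] using
      mem_range_mulVecLin_iff A x
  simp only [LinearMap.mem_ker, mulVecLin_apply, hrange]
  exact ⟨fun h u hu v hv => h v hv u hu, fun h v hv u hu => h u hu v hv⟩

end Range

section Blocks

variable (F) (ι κ : Type*)

def symmetricMatrices : Submodule F (Matrix ι ι F) where
  carrier := {X | X.IsSymm}
  add_mem' := IsSymm.add
  zero_mem' := isSymm_zero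
  smul_mem' c _ h := h.smul c

def symmetricZeroCorner : Submodule F (Matrix (ι ⊕ κ) (ι ⊕ κ) F) where
  carrier := {C | C.IsSymm ∧ ∀ k k', C (.inr k) (.inr k') = 0}
  add_mem' hC hD := ⟨hC.1.add hD.1, fun k k' => by simp [hC.2 k k', hD.2 k k']⟩
  zero_mem' := ⟨isSymm_zero, fun _ _ => rfl⟩
  smul_mem' c _ hC := ⟨hC.1.smul c, fun k k' => by simp [hC.2 k k']⟩

def symmetricZeroCornerEquiv :
    symmetricZeroCorner F ι κ ≃ₗ[F] symmetricMatrices F ι × Matrix ι κ F where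
  toFun C := (⟨C.1.toBlocks₁₁, congr_arg toBlocks₁₁ C.2.1⟩, C.1.toBlocks₁₂)
  map_add' _ _ := rfl
  map_smul' _ _ := rfl
  invFun XY := ⟨fromBlocks XY.1 XY.2 XY.2ᵀ 0,
    IsSymm.fromBlocks XY.1.2 rfl isSymm_zero, fun _ _ => rfl⟩
  left_inv C := by
    obtain ⟨C, hsymm, hcorner⟩ := C
    ext (i | k) (j | k')
    · rfl
    · rfl
    · exact hsymm.apply _ _
    · exact (hcorner k k').symm
  right_inv XY := by ext1 <;> simp

theorem finrank_symmetricZeroCorner [Fintype ι] [Fintype κ] :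
    finrank F (symmetricZeroCorner F ι κ) =
      finrank F (symmetricMatrices F ι) + Fintype.card ι * Fintype.card κ := by
  rw [(symmetricZeroCornerEquiv F ι κ).finrank_eq, finrank_prod, finrank_matrix, finrank_self,
    mul_one]

theorem finrank_symmetricMatrices_fin_two : finrank F (symmetricMatrices F (Fin 2)) = 3 := by
  let e : symmetricMatrices F (Fin 2) ≃ₗ[F] (Fin 3 → F) :=
    { toFun X := ![X.1 0 0, X.1 0 1, X.1 1 1]
      map_add' _ _ := by ext i; fin_cases i <;> rfl
      map_smul' _ _ := by ext i; fin_cases i <;> rfl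
      invFun v := ⟨!![v 0, v 1; v 1, v 2], by
        refine IsSymm.ext fun i j => ?_; fin_cases i <;> fin_cases j <;> rfl⟩
      left_inv X := by
        ext i j
        have := X.2.apply
        fin_cases i <;> fin_cases j <;> simp [this 0 1]
      right_inv v := by ext i; fin_cases i <;> rfl }
  simp [e.finrank_eq]

end Blocks

section Gram

variable {n ι : Type*} [Fintype n] [DecidableEq n] [Fintype ι] [DecidableEq ι]

noncomputable def gramEquiv (b : Basis ι F (n → F)) : Matrix n n F ≃ₗ[F] Matrix ι ι F :=
  (toLinearMap₂' F).trans (LinearMap.toMatrix₂ b b)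

theorem gramEquiv_apply (b : Basis ι F (n → F)) (B : Matrix n n F) (i j : ι) :
    gramEquiv b B i j = b i ⬝ᵥ B *ᵥ b j := by
  simp [gramEquiv, LinearMap.toMatrix₂_apply, toLinearMap₂'_apply']

theorem gramEquiv_transpose (b : Basis ι F (n → F)) (B : Matrix n n F) :
    gramEquiv b Bᵀ = (gramEquiv b B)ᵀ := by
  ext i j
  rw [transpose_apply, gramEquiv_apply, gramEquiv_apply, dotProduct_mulVec, vecMul_transpose,
    dotProduct_comm]

theorem isSymm_gramEquiv_iff (b : Basis ι F (n → F)) {B : Matrix n n F} :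
    (gramEquiv b B).IsSymm ↔ B.IsSymm := by
  rw [IsSymm, IsSymm, ← gramEquiv_transpose, (gramEquiv b).injective.eq_iff]

end Gram

section Isotropic

variable {n : Type*} [Fintype n] [DecidableEq n]

def isotropicSymmetricMatrices (K : Submodule F (n → F)) : Submodule F (Matrix n n F) where
  carrier := {B | B.IsSymm ∧ ∀ u ∈ K, ∀ v ∈ K, u ⬝ᵥ B *ᵥ v = 0}
  add_mem' hB hC := ⟨hB.1.add hC.1, fun u hu v hv => by
    rw [add_mulVec, dotProduct_add, hB.2 u hu v hv, hC.2 u hu v hv, add_zero]⟩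
  zero_mem' := ⟨isSymm_zero, fun u _ v _ => by simp⟩
  smul_mem' c _ hB := ⟨hB.1.smul c, fun u hu v hv => by
    rw [smul_mulVec, dotProduct_smul, hB.2 u hu v hv, smul_zero]⟩

theorem forall_mem_dotProduct_mulVec_eq_zero_iff {κ : Type*} {K : Submodule F (n → F)}
    (bK : Basis κ F K) (B : Matrix n n F) :
    (∀ u ∈ K, ∀ v ∈ K, u ⬝ᵥ B *ᵥ v = 0) ↔ ∀ k k', (bK k : n → F) ⬝ᵥ B *ᵥ bK k' = 0 := by
  refine ⟨fun h k k' => h _ (bK k).2 _ (bK k').2, fun h u hu v hv => ?_⟩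
  have hzero : (toLinearMap₂' F B).compl₁₂ K.subtype K.subtype = 0 :=
    LinearMap.ext_basis bK bK fun k k' => by simpa [toLinearMap₂'_apply'] using h k k'
  simpa [toLinearMap₂'_apply'] using LinearMap.congr_fun₂ hzero ⟨u, hu⟩ ⟨v, hv⟩

theorem isotropicSymmetricMatrices_eq_comap_gramEquiv {ι κ : Type*} [Fintype ι] [DecidableEq ι]
    [Fintype κ] [DecidableEq κ] {W K : Submodule F (n → F)} (h : IsCompl W K)
    (bW : Basis ι F W) (bK : Basis κ F K) :
    isotropicSymmetricMatrices K = (symmetricZeroCorner F ι κ).comap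
      (gramEquiv ((bW.prod bK).map (W.prodEquivOfIsCompl K h))).toLinearMap := by
  ext B
  simp only [Submodule.mem_comap, LinearEquiv.coe_coe]
  refine and_congr (isSymm_gramEquiv_iff _).symm ?_
  rw [forall_mem_dotProduct_mulVec_eq_zero_iff bK]
  simp [gramEquiv_apply, Basis.prod_apply]

theorem finrank_isotropicSymmetricMatrices (K : Submodule F (n → F)) :
    finrank F (isotropicSymmetricMatrices K) =
      finrank F (symmetricMatrices F (Fin (Fintype.card n - finrank F K))) +
        (Fintype.card n - finrank F K) * finrank F K := by
  obtain ⟨W, hW⟩ := K.exists_isCompl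
  have hdim : finrank F W + finrank F K = Fintype.card n := by
    rw [Submodule.finrank_add_eq_of_isCompl hW.symm, finrank_fintype_fun_eq_card]
  rw [isotropicSymmetricMatrices_eq_comap_gramEquiv hW.symm (finBasis F W) (finBasis F K),
    Submodule.comap_equiv_eq_map_symm, LinearEquiv.finrank_map_eq, finrank_symmetricZeroCorner,
    Fintype.card_fin, Fintype.card_fin, show Fintype.card n - finrank F K = finrank F W by omega]

end Isotropic

end Matrix

theorem dim_tangent_space_rank_two_general (n : ℕ)
    (A : Matrix (Fin n) (Fin n) ℂ) (hA : A.transpose = A) (hrank : A.rank = 2)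
    (T : Submodule ℂ (Matrix (Fin n) (Fin n) ℂ))
    (hT : ∀ B : Matrix (Fin n) (Fin n) ℂ,
      B ∈ T ↔ (B.transpose = B ∧
        ∀ v : Fin n → ℂ, A.mulVec v = 0 → ∃ w : Fin n → ℂ, B.mulVec v = A.mulVec w)) :
    Module.finrank ℂ T = 2 * n - 1 := by
  have hT_eq : T = isotropicSymmetricMatrices (LinearMap.ker A.mulVecLin) := by
    ext B
    rw [hT, IsSymm.forall_mulVec_mem_range_iff hA]
    rfl
  have hker : 2 + finrank ℂ (LinearMap.ker A.mulVecLin) = n := by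
    rw [← hrank, rank, LinearMap.finrank_range_add_finrank_ker, finrank_fin_fun]
  rw [hT_eq, finrank_isotropicSymmetricMatrices, Fintype.card_fin,
    show n - finrank ℂ (LinearMap.ker A.mulVecLin) = 2 by omega, finrank_symmetricMatrices_fin_two]
  omega

/-- Let `n ≥ 2` and `A` a symmetric `n×n` complex matrix of rank `2`.  The
subspace `T = {B : Bᵀ = B ∧ B·(ker A) ⊆ im A}` of `n×n` complex matrices (the Zariski
tangent space at `A` to the cone of symmetric matrices of rank at most `2`) has
dimension `2n − 1`. -/
theorem dim_tangent_space_rank_two (n : ℕ) (hn : 2 ≤ n)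
    (A : Matrix (Fin n) (Fin n) ℂ) (hA : A.transpose = A) (hrank : A.rank = 2)
    (T : Submodule ℂ (Matrix (Fin n) (Fin n) ℂ))
    (hT : ∀ B : Matrix (Fin n) (Fin n) ℂ,
      B ∈ T ↔ (B.transpose = B ∧
        ∀ v : Fin n → ℂ, A.mulVec v = 0 → ∃ w : Fin n → ℂ, B.mulVec v = A.mulVec w)) :
    Module.finrank ℂ T = 2 * n - 1 :=
  dim_tangent_space_rank_two_general n A hA hrank T hT
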